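/- For unit quaternions p and q, the map h ↦ p h q⁻¹ maps the equatorial 2-sphere S² = {h ∈ ℍ : Re h = 0, ‖h‖ = 1} (the set of purely imaginary unit quaternions, i.e., the points of S³ equidistant from 1 and −1) onto itself if and only if p = q or p = −q. -/

import Mathlib

open Quaternion
open scoped Quaternion

/-!
Since `Re (a b) = Re (b a)`, the real part of `p h q⁻¹` is that of `(q⁻¹ p) h`. If the map sends
the purely imaginary unit sphere into itself, then for `s = q⁻¹ p` and `h = Im s / ‖Im s‖` we get
`0 = Re (s h) = -‖Im s‖`, so the unit quaternion `s` is real, i.e. `s = ±1`. Conversely,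
conjugation by `q` preserves real parts and norms, and the sphere is symmetric under `h ↦ -h`.
-/

namespace Quaternion

def imUnitSphere : Set ℍ[ℝ] := {h | h.re = 0 ∧ ‖h‖ = 1}

lemma re_mul_comm {R : Type*} [CommRing R] (a b : ℍ[R]) : (a * b).re = (b * a).re := by
  simp only [re_mul]; ring

lemma neg_imUnitSphere : -imUnitSphere = imUnitSphere := by
  ext h; simp [imUnitSphere]

lemma mapsTo_conj_imUnitSphere {q : ℍ[ℝ]} (hq : q ≠ 0) :
    Set.MapsTo (fun h => q * h * q⁻¹) imUnitSphere imUnitSphere := by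
  rintro h ⟨h_re, h_norm⟩
  refine ⟨?_, ?_⟩
  · rw [re_mul_comm, ← mul_assoc, inv_mul_cancel₀ hq, one_mul, h_re]
  · rw [norm_mul, norm_mul, norm_inv, h_norm, mul_one, mul_inv_cancel₀ (norm_ne_zero_iff.mpr hq)]

lemma image_conj_imUnitSphere {q : ℍ[ℝ]} (hq : q ≠ 0) :
    (fun h => q * h * q⁻¹) '' imUnitSphere = imUnitSphere := by
  refine Set.SurjOn.image_eq_of_mapsTo (fun x hx => ?_) (mapsTo_conj_imUnitSphere hq)
  refine ⟨q⁻¹ * x * q⁻¹⁻¹, mapsTo_conj_imUnitSphere (inv_ne_zero hq) hx, ?_⟩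
  simp only [inv_inv, ← mul_assoc, mul_inv_cancel₀ hq, one_mul]
  rw [mul_assoc, mul_inv_cancel₀ hq, mul_one]

lemma re_mul_im_self {R : Type*} [CommRing R] (s : ℍ[R]) : (s * s.im).re = -normSq s.im := by
  simp only [re_mul, normSq_def', re_im, imI_im, imJ_im, imK_im]; ring

lemma im_eq_zero_of_forall_re_mul_eq_zero {s : ℍ[ℝ]}
    (hs : ∀ h ∈ imUnitSphere, (s * h).re = 0) : s.im = 0 := by
  by_contra h_im
  have h_pos : 0 < ‖s.im‖ := norm_pos_iff.mpr h_im
  have h_unit : ‖s.im‖⁻¹ • s.im ∈ imUnitSphere :=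
    ⟨by simp, by rw [norm_smul, norm_inv, norm_norm, inv_mul_cancel₀ h_pos.ne']⟩
  have h_re := hs _ h_unit
  rw [mul_smul_comm, re_smul, re_mul_im_self, normSq_eq_norm_mul_self, smul_eq_mul, mul_neg,
    ← mul_assoc, inv_mul_cancel₀ h_pos.ne', one_mul, neg_eq_zero] at h_re
  exact h_pos.ne' h_re

lemma eq_one_or_eq_neg_one_of_im_eq_zero {s : ℍ[ℝ]} (hs : ‖s‖ = 1) (h_im : s.im = 0) :
    s = 1 ∨ s = -1 := by
  have h_real : (s.re : ℍ[ℝ]) = s := by rw [← re_add_im s, h_im, add_zero, re_coe]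
  rw [← h_real, norm_coe, Real.norm_eq_abs] at hs
  rcases abs_eq (zero_le_one' ℝ) |>.mp hs with h | h
  · left; rw [← h_real, h, coe_one]
  · right; rw [← h_real, h, coe_neg, coe_one]

end Quaternion

/-- For unit quaternions `p` and `q`, the map `h ↦ p * h * q⁻¹` maps the equatorial 2-sphere
`S² = {h : Re h = 0, ‖h‖ = 1}` of purely imaginary unit quaternions onto itself
if and only if `p = q` or `p = -q`. -/
theorem stmt9 (p q : ℍ[ℝ]) (hp : ‖p‖ = 1) (hq : ‖q‖ = 1) :
    (fun h : ℍ[ℝ] => p * h * q⁻¹) '' {h : ℍ[ℝ] | h.re = 0 ∧ ‖h‖ = 1}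
        = {h : ℍ[ℝ] | h.re = 0 ∧ ‖h‖ = 1}
      ↔ (p = q ∨ p = -q) := by
  change _ '' imUnitSphere = imUnitSphere ↔ _
  have hq0 : q ≠ 0 := norm_ne_zero_iff.mp (hq ▸ one_ne_zero)
  constructor
  · intro h_image
    have h_re : ∀ h ∈ imUnitSphere, (q⁻¹ * p * h).re = 0 := fun h hh => by
      rw [mul_assoc, re_mul_comm]
      exact (h_image.subset (Set.mem_image_of_mem _ hh)).1
    have h_norm : ‖q⁻¹ * p‖ = 1 := by rw [norm_mul, norm_inv, hp, hq, inv_one, one_mul]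
    have h_p : p = q * (q⁻¹ * p) := by rw [← mul_assoc, mul_inv_cancel₀ hq0, one_mul]
    rcases eq_one_or_eq_neg_one_of_im_eq_zero h_norm (im_eq_zero_of_forall_re_mul_eq_zero h_re)
      with h | h <;> rw [h_p, h]
    · exact .inl (mul_one q)
    · exact .inr (mul_neg_one q)
  · rintro (rfl | rfl)
    · exact image_conj_imUnitSphere hq0
    · have h_comp : (fun h => -q * h * q⁻¹) = (fun h => q * h * q⁻¹) ∘ Neg.neg := by
        ext1 h; simp [neg_mul, mul_neg]
      rw [h_comp, Set.image_comp, Set.image_neg_eq_neg, neg_imUnitSphere,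
        image_conj_imUnitSphere hq0]
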